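/- Let A and B be unital C*-algebras and T̃ : A → B a surjective real-linear isometry such that T̃(1_A) is invertible in B and T̃ satisfies T̃(a b* c + c b* a) = T̃(a) T̃(b)* T̃(c) + T̃(c) T̃(b)* T̃(a) for all a, b, c ∈ A. Then T̃(1_A) is a unitary element of B. -/
import Mathlib


theorem stmtN
    {A B : Type*}
    [NormedRing A] [StarRing A] [CStarRing A] [NormedAlgebra ℂ A]
    [CompleteSpace A] [StarModule ℂ A]
    [NormedRing B] [StarRing B] [CStarRing B] [NormedAlgebra ℂ B]
    [CompleteSpace B] [StarModule ℂ B]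
    (T : A →ₗ[ℝ] B)
    (hsurj : Function.Surjective T)
    (hiso : Isometry T)
    (hinv : IsUnit (T 1))
    (htriple : ∀ a b c : A,
      T (a * star b * c + c * star b * a)
        = T a * star (T b) * T c + T c * star (T b) * T a) :
    T 1 ∈ unitary B := by
  set u := T 1 with hu
  have key : u * star u * u + u * star u * u = u + u := by
    have h := htriple 1 1 1
    simp only [star_one, mul_one, one_mul, map_add] at h
    exact h.symm
  have h2 : u * star u * u = u := by
    have h2' : (2 : ℝ) • (u * star u * u) = (2 : ℝ) • u := by
      rw [two_smul, two_smul]; exact key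
    exact smul_right_injective B two_ne_zero h2'
  obtain ⟨v, hv⟩ := hinv
  have h2' : u * (star u * u) = u := by rw [← mul_assoc]; exact h2
  constructor
  · have h := congrArg (fun x : B => (↑v⁻¹ : B) * x) h2'
    simp only [← hv, ← mul_assoc, Units.inv_mul, one_mul] at h ⊢
    exact h
  · have h := congrArg (· * (↑v⁻¹ : B)) h2
    simp only [← hv, mul_assoc, Units.mul_inv, mul_one] at h ⊢
    exact h
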